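/- Exactness of the μ-mode integrator in three dimensions: for complex square matrices A₁ (n₁×n₁), A₂ (n₂×n₂), A₃ (n₃×n₃), M = A₃ ⊗ I₂ ⊗ I₁ + I₃ ⊗ A₂ ⊗ I₁ + I₃ ⊗ I₂ ⊗ A₁, any order-3 complex array U₀ indexed by (i₁,i₂,i₃) ∈ Fin n₁ × Fin n₂ × Fin n₃, and any t ∈ ℝ, the entry of exp(t·M)·vec U₀ at index (i₃,i₂,i₁) equals Σ_{j₁,j₂,j₃} exp(t·A₁)(i₁,j₁)·exp(t·A₂)(i₂,j₂)·exp(t·A₃)(i₃,j₃)·U₀(j₁,j₂,j₃), i.e., the result of the three successive μ-mode products of exp(t·A₁), exp(t·A₂), exp(t·A₃) with U₀. -/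

import Mathlib

/-!
`A ↦ A ⊗ₖ 1` and `B ↦ 1 ⊗ₖ B` are continuous algebra homomorphisms, so they commute with `exp`,
and their images commute with each other. Hence `exp (A ⊗ₖ 1 + 1 ⊗ₖ B) = exp A ⊗ₖ exp B`, and
since `M = (A₃ ⊗ₖ 1 + 1 ⊗ₖ A₂) ⊗ₖ 1 + 1 ⊗ₖ A₁`, two applications give
`exp (t • M) = (exp (t • A₃) ⊗ₖ exp (t • A₂)) ⊗ₖ exp (t • A₁)`. Applying a triple Kronecker
product to `vec U₀` is exactly the three successive mode products.
-/

open Matrix Kronecker NormedSpace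

namespace Matrix

variable {R 𝕜 l m n : Type*}

section Kronecker

variable [CommSemiring R] [Fintype l] [DecidableEq l] [Fintype m] [DecidableEq m]

variable (R l m) in
def kroneckerOneAlgHom : Matrix l l R →ₐ[R] Matrix (l × m) (l × m) R where
  toFun A := A ⊗ₖ (1 : Matrix m m R)
  map_one' := one_kronecker_one
  map_mul' A B := by rw [← mul_kronecker_mul, one_mul]
  map_zero' := zero_kronecker _
  map_add' A B := add_kronecker A B _
  commutes' r := by
    simp only [algebraMap_eq_diagonal, Pi.algebraMap_def, ← smul_one_eq_diagonal, smul_kronecker,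
      one_kronecker_one]

variable (R l m) in
def oneKroneckerAlgHom : Matrix m m R →ₐ[R] Matrix (l × m) (l × m) R where
  toFun B := (1 : Matrix l l R) ⊗ₖ B
  map_one' := one_kronecker_one
  map_mul' A B := by rw [← mul_kronecker_mul, one_mul]
  map_zero' := kronecker_zero _
  map_add' A B := kronecker_add _ A B
  commutes' r := by
    simp only [algebraMap_eq_diagonal, Pi.algebraMap_def, ← smul_one_eq_diagonal, kronecker_smul,
      one_kronecker_one]

theorem commute_kronecker_one_one_kronecker (A : Matrix l l R) (B : Matrix m m R) :
    Commute (A ⊗ₖ (1 : Matrix m m R)) ((1 : Matrix l l R) ⊗ₖ B) := by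
  simp only [Commute, SemiconjBy, ← mul_kronecker_mul, one_mul, mul_one]

end Kronecker

section Exp

variable [RCLike 𝕜] [Fintype l] [DecidableEq l] [Fintype m] [DecidableEq m]

theorem map_exp_of_algHom (f : Matrix l l 𝕜 →ₐ[𝕜] Matrix m m 𝕜) (A : Matrix l l 𝕜) :
    f (exp A) = exp (f A) := by
  open scoped Matrix.Norms.Operator in
  exact map_exp f (LinearMap.continuous_of_finiteDimensional f.toLinearMap) A

theorem exp_kronecker_one (A : Matrix l l 𝕜) :
    exp (A ⊗ₖ (1 : Matrix m m 𝕜)) = exp A ⊗ₖ (1 : Matrix m m 𝕜) :=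
  (map_exp_of_algHom (kroneckerOneAlgHom 𝕜 l m) A).symm

theorem exp_one_kronecker (B : Matrix m m 𝕜) :
    exp ((1 : Matrix l l 𝕜) ⊗ₖ B) = (1 : Matrix l l 𝕜) ⊗ₖ exp B :=
  (map_exp_of_algHom (oneKroneckerAlgHom 𝕜 l m) B).symm

theorem exp_kroneckerSum (A : Matrix l l 𝕜) (B : Matrix m m 𝕜) :
    exp (A ⊗ₖ (1 : Matrix m m 𝕜) + (1 : Matrix l l 𝕜) ⊗ₖ B) = exp A ⊗ₖ exp B := by
  rw [exp_add_of_commute _ _ (commute_kronecker_one_one_kronecker A B), exp_kronecker_one,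
    exp_one_kronecker, ← mul_kronecker_mul, mul_one, one_mul]

theorem exp_smul_kroneckerSum (c : 𝕜) (A : Matrix l l 𝕜) (B : Matrix m m 𝕜) :
    exp (c • (A ⊗ₖ (1 : Matrix m m 𝕜) + (1 : Matrix l l 𝕜) ⊗ₖ B)) =
      exp (c • A) ⊗ₖ exp (c • B) := by
  rw [smul_add, ← smul_kronecker, ← kronecker_smul, exp_kroneckerSum]

end Exp

theorem kronecker_kronecker_mulVec_apply [CommSemiring R] [Fintype l] [Fintype m] [Fintype n]
    (P : Matrix l l R) (Q : Matrix m m R) (S : Matrix n n R) (v : (l × m) × n → R)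
    (i : l) (j : m) (k : n) :
    ((P ⊗ₖ Q) ⊗ₖ S *ᵥ v) ((i, j), k) = ∑ c, ∑ b, ∑ a, P i a * Q j b * S k c * v ((a, b), c) := by
  simp only [mulVec, dotProduct, Fintype.sum_prod_type, kronecker_apply]
  rw [Finset.sum_comm]
  simp_rw [Finset.sum_comm (γ := l)]
  exact Finset.sum_comm

end Matrix

theorem mu_mode_exact_3d (n₁ n₂ n₃ : ℕ)
    (A₁ : Matrix (Fin n₁) (Fin n₁) ℂ) (A₂ : Matrix (Fin n₂) (Fin n₂) ℂ)
    (A₃ : Matrix (Fin n₃) (Fin n₃) ℂ)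
    (U₀ : Fin n₁ → Fin n₂ → Fin n₃ → ℂ) (t : ℝ)
    (i₁ : Fin n₁) (i₂ : Fin n₂) (i₃ : Fin n₃) :
    (NormedSpace.exp ((t : ℂ) •
        ((A₃ ⊗ₖ (1 : Matrix (Fin n₂) (Fin n₂) ℂ)) ⊗ₖ (1 : Matrix (Fin n₁) (Fin n₁) ℂ) +
          ((1 : Matrix (Fin n₃) (Fin n₃) ℂ) ⊗ₖ A₂) ⊗ₖ (1 : Matrix (Fin n₁) (Fin n₁) ℂ) +
          ((1 : Matrix (Fin n₃) (Fin n₃) ℂ) ⊗ₖ (1 : Matrix (Fin n₂) (Fin n₂) ℂ)) ⊗ₖ A₁))).mulVec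
        (fun q : (Fin n₃ × Fin n₂) × Fin n₁ => U₀ q.2 q.1.2 q.1.1) ((i₃, i₂), i₁) =
      ∑ j₁ : Fin n₁, ∑ j₂ : Fin n₂, ∑ j₃ : Fin n₃,
        NormedSpace.exp ((t : ℂ) • A₁) i₁ j₁ *
          NormedSpace.exp ((t : ℂ) • A₂) i₂ j₂ *
          NormedSpace.exp ((t : ℂ) • A₃) i₃ j₃ * U₀ j₁ j₂ j₃ := by
  rw [one_kronecker_one, ← add_kronecker, exp_smul_kroneckerSum, exp_smul_kroneckerSum,
    kronecker_kronecker_mulVec_apply]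
  exact Fintype.sum_congr _ _ fun j₁ => Fintype.sum_congr _ _ fun j₂ =>
    Fintype.sum_congr _ _ fun j₃ => by ring
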